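/- arXiv:1912.11220 — 4 statements merged into one kernel-verified Lean document; each statement's English description precedes it below -/
import Mathlib

section
/- Let p be a prime with p ≡ 1 (mod 4), and let M be an even lattice of signature (n,2) whose level is exactly p. Then n ≡ 2 (mod 4). -/
open Matrix

namespace LatQ

variable {ι κ : Type*} [Fintype ι] [Fintype κ]

/-- The bilinear form on `ι → ℚ` given by the matrix `F`. -/
def bform (F : Matrix ι ι ℚ) (x y : ι → ℚ) : ℚ := x ⬝ᵥ F *ᵥ y

/-- A rational number is an integer. -/
def isIntQ (q : ℚ) : Prop := ∃ m : ℤ, q = (m : ℚ)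

lemma isIntQ_add {a b : ℚ} (ha : isIntQ a) (hb : isIntQ b) : isIntQ (a + b) := by
  obtain ⟨m, rfl⟩ := ha; obtain ⟨n, rfl⟩ := hb; exact ⟨m + n, by push_cast; ring⟩

lemma bform_add_left (F : Matrix ι ι ℚ) (a b y : ι → ℚ) :
    bform F (a + b) y = bform F a y + bform F b y := add_dotProduct a b _

lemma bform_zero_left (F : Matrix ι ι ℚ) (y : ι → ℚ) : bform F 0 y = 0 := zero_dotProduct _

lemma bform_zsmul_left (F : Matrix ι ι ℚ) (c : ℤ) (x y : ι → ℚ) :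
    bform F (c • x) y = (c : ℚ) * bform F x y := by
  unfold bform
  rw [← Int.cast_smul_eq_zsmul ℚ c x, smul_dotProduct, smul_eq_mul]

/-- The dual lattice of `L` with respect to the form `F`, inside the ambient space `ι → ℚ`. -/
def dual (F : Matrix ι ι ℚ) (L : Submodule ℤ (ι → ℚ)) : Submodule ℤ (ι → ℚ) where
  carrier := {x | ∀ y ∈ L, isIntQ (bform F x y)}
  zero_mem' := fun y _ => ⟨0, by simp [bform_zero_left]⟩
  add_mem' := fun ha hb y hy => by
    have := isIntQ_add (ha y hy) (hb y hy)
    rwa [← bform_add_left] at this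
  smul_mem' := fun c x hx y hy => by
    obtain ⟨m, hm⟩ := hx y hy
    exact ⟨c * m, by rw [bform_zsmul_left, hm]; push_cast; ring⟩

/-- The standard lattice `ℤ^ι` inside `ℚ^ι`. -/
def stdLat (ι : Type*) : Submodule ℤ (ι → ℚ) where
  carrier := {x | ∀ i, isIntQ (x i)}
  zero_mem' := fun i => ⟨0, by simp⟩
  add_mem' := fun ha hb i => isIntQ_add (ha i) (hb i)
  smul_mem' := fun c x hx i => by
    obtain ⟨m, hm⟩ := hx i
    exact ⟨c * m, by rw [Pi.smul_apply, hm, zsmul_eq_mul]; push_cast; ring⟩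

/-- `L` is an even lattice (of full rank) in `(ι → ℚ, bform F)`. -/
structure IsEvenLattice [DecidableEq ι] (F : Matrix ι ι ℚ) (L : Submodule ℤ (ι → ℚ)) : Prop where
  fg : L.FG
  spans : Submodule.span ℚ (L : Set (ι → ℚ)) = ⊤
  symm : F.IsSymm
  nondeg : F.det ≠ 0
  integral : ∀ x ∈ L, ∀ y ∈ L, isIntQ (bform F x y)
  even : ∀ x ∈ L, ∃ m : ℤ, bform F x x = 2 * m

/-- The real quadratic form of `F` diagonalizes with `bp` positive and `bm` negative entries. -/
def HasSignature [DecidableEq ι] (F : Matrix ι ι ℚ) (bp bm : ℕ) : Prop :=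
  ∃ P : Matrix ι ι ℝ, IsUnit P.det ∧ (Pᵀ * F.map ((↑) : ℚ → ℝ) * P).IsDiag ∧
    Nat.card {i : ι // 0 < (Pᵀ * F.map ((↑) : ℚ → ℝ) * P) i i} = bp ∧
    Nat.card {i : ι // (Pᵀ * F.map ((↑) : ℚ → ℝ) * P) i i < 0} = bm

/-- `N` is the level of the even lattice `L`: the smallest positive integer with
`N·(x,x) ∈ 2ℤ` for all `x` in the dual lattice. -/
def HasLevel (F : Matrix ι ι ℚ) (L : Submodule ℤ (ι → ℚ)) (N : ℕ) : Prop :=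
  0 < N ∧ (∀ x ∈ dual F L, ∃ m : ℤ, (N : ℚ) * bform F x x = 2 * m) ∧
    ∀ N' : ℕ, 0 < N' → (∀ x ∈ dual F L, ∃ m : ℤ, (N' : ℚ) * bform F x x = 2 * m) → N ≤ N'

/-- The order of the discriminant group `L^∨/L`. -/
noncomputable def discCard (F : Matrix ι ι ℚ) (L : Submodule ℤ (ι → ℚ)) : ℕ :=
  Nat.card ((↥(dual F L)) ⧸ (Submodule.comap (dual F L).subtype L))

/-- Two lattices (with ambient forms) are isometric. -/
def Isometric (F : Matrix ι ι ℚ) (L : Submodule ℤ (ι → ℚ))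
    (F' : Matrix κ κ ℚ) (L' : Submodule ℤ (κ → ℚ)) : Prop :=
  ∃ e : L ≃ₗ[ℤ] L', ∀ x y : L,
    bform F' ((e x : κ → ℚ)) ((e y : κ → ℚ)) = bform F (x : ι → ℚ) (y : ι → ℚ)

/-- The isometry group `O(L)` of the lattice `L` with form `F`. -/
def OGroup (F : Matrix ι ι ℚ) (L : Submodule ℤ (ι → ℚ)) : Subgroup (↥L ≃ₗ[ℤ] ↥L) where
  carrier := {e | ∀ x y : L,
    bform F ((e x : ι → ℚ)) ((e y : ι → ℚ)) = bform F (x : ι → ℚ) (y : ι → ℚ)}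
  one_mem' := fun x y => rfl
  mul_mem' := fun {a b} ha hb x y => by
    have h1 : ∀ z : L, (a * b) z = a (b z) := fun z => rfl
    rw [h1, h1, ha, hb]
  inv_mem' := fun {a} ha x y => by
    have h := ha (a⁻¹ x) (a⁻¹ y)
    have hx : a (a⁻¹ x) = x := a.apply_symm_apply x
    have hy : a (a⁻¹ y) = y := a.apply_symm_apply y
    rw [hx, hy] at h
    exact h.symm

/-- Orthogonal direct sum of forms. -/
def oplusF (F : Matrix ι ι ℚ) (G : Matrix κ κ ℚ) : Matrix (ι ⊕ κ) (ι ⊕ κ) ℚ :=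
  Matrix.fromBlocks F 0 0 G

/-- Orthogonal direct sum of lattices. -/
def oplusL (L : Submodule ℤ (ι → ℚ)) (M : Submodule ℤ (κ → ℚ)) :
    Submodule ℤ (ι ⊕ κ → ℚ) where
  carrier := {x | (fun i => x (Sum.inl i)) ∈ L ∧ (fun j => x (Sum.inr j)) ∈ M}
  zero_mem' := ⟨L.zero_mem, M.zero_mem⟩
  add_mem' := fun ha hb => ⟨L.add_mem ha.1 hb.1, M.add_mem ha.2 hb.2⟩
  smul_mem' := fun c _ hx => ⟨L.smul_mem c hx.1, M.smul_mem c hx.2⟩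

end LatQ

/-!
Let `g` be the Gram matrix of a `ℤ`-basis of `M`. Since the signature is `(n, 2)`, `det g > 0`;
since `p (x, x) ∈ 2ℤ` on the dual lattice, polarisation makes `p g⁻¹` integral, so `det g`
divides a power of `p`. Hence `det g` is a power of `p`, and `det g ≡ 1 (mod 4)`.

On the other hand, modulo 4 a symmetric matrix with even diagonal and unit determinant has even
size `2s` and determinant `(-1)^s`: an odd off-diagonal entry spans a `2 × 2` block of determinant
`-1`, and its Schur complement is again symmetric with even diagonal. So `s` is even and
`n + 2 = 2s ≡ 0 (mod 4)`.
-/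

namespace LatQ

section ZModFour

lemma sq_eq_one_of_not_two_dvd : ∀ x : ZMod 4, ¬ 2 ∣ x → x ^ 2 = 1 := by decide

lemma det_fin_two_eq_neg_one {A : Matrix (Fin 2) (Fin 2) (ZMod 4)} (hA : A.IsSymm)
    (h0 : 2 ∣ A 0 0) (h1 : 2 ∣ A 1 1) (h01 : ¬ 2 ∣ A 0 1) : A.det = -1 := by
  obtain ⟨a, ha⟩ := h0
  obtain ⟨b, hb⟩ := h1
  have h4 : (4 : ZMod 4) = 0 := rfl
  rw [det_fin_two, hA.apply 0 1, ha, hb, ← sq, sq_eq_one_of_not_two_dvd _ h01]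
  linear_combination a * b * h4

lemma two_dvd_transpose_mul_mul_apply {R κ : Type*} [CommRing R] {M : Matrix (Fin 2) (Fin 2) R}
    (hM : M.IsSymm) (h0 : 2 ∣ M 0 0) (h1 : 2 ∣ M 1 1) (C : Matrix (Fin 2) κ R) (k : κ) :
    2 ∣ (Cᵀ * M * C) k k := by
  obtain ⟨a, ha⟩ := h0
  obtain ⟨b, hb⟩ := h1
  refine ⟨C 0 k ^ 2 * a + C 0 k * C 1 k * M 0 1 + C 1 k ^ 2 * b, ?_⟩
  simp only [mul_apply, Fin.sum_univ_two, transpose_apply, ← hM.apply 0 1, ha, hb]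
  ring

lemma inv_eq_neg_adjugate_of_det_eq_neg_one {n R : Type*} [Fintype n] [DecidableEq n]
    [CommRing R] {A : Matrix n n R} (hA : A.det = -1) : A⁻¹ = -A.adjugate :=
  inv_eq_right_inv (by rw [mul_neg, mul_adjugate, hA, neg_smul, one_smul, neg_neg])

lemma exists_schur_complement {κ : Type*} [Fintype κ] [DecidableEq κ]
    {A : Matrix (Fin 2) (Fin 2) (ZMod 4)} {C : Matrix (Fin 2) κ (ZMod 4)}
    {D : Matrix κ κ (ZMod 4)} (hA : A.IsSymm) (hD : D.IsSymm) (hA0 : 2 ∣ A 0 0)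
    (hA1 : 2 ∣ A 1 1) (hA01 : ¬ 2 ∣ A 0 1) (hDdiag : ∀ k, 2 ∣ D k k) :
    ∃ S : Matrix κ κ (ZMod 4), S.IsSymm ∧ (∀ k, 2 ∣ S k k) ∧
      (fromBlocks A C Cᵀ D).det = -S.det := by
  have hdetA := det_fin_two_eq_neg_one hA hA0 hA1 hA01
  have hinv := inv_eq_neg_adjugate_of_det_eq_neg_one hdetA
  let := A.invertibleOfIsUnitDet (hdetA ▸ isUnit_neg_one)
  refine ⟨D - Cᵀ * A⁻¹ * C, ?_, fun k => ?_, ?_⟩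
  · rw [IsSymm, transpose_sub, transpose_mul, transpose_mul, transpose_nonsing_inv, hA.eq,
      hD.eq, transpose_transpose, Matrix.mul_assoc]
  · refine dvd_sub (hDdiag k) (two_dvd_transpose_mul_mul_apply ?_ ?_ ?_ C k)
    · rw [hinv, IsSymm, transpose_neg, adjugate_transpose, hA.eq]
    · simp [hinv, adjugate_fin_two, hA1]
    · simp [hinv, adjugate_fin_two, hA0]
  · rw [det_fromBlocks₁₁, invOf_eq_nonsing_inv, hdetA, neg_one_mul]

lemma exists_ne_not_two_dvd {ι : Type*} [Fintype ι] [DecidableEq ι] [Nonempty ι]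
    {G : Matrix ι ι (ZMod 4)} (hdiag : ∀ i, 2 ∣ G i i) (hG : IsUnit G.det) :
    ∃ i j, i ≠ j ∧ ¬ 2 ∣ G i j := by
  by_contra! hoff
  have heven (i j : ι) : 2 ∣ G i j := if hij : i = j then hij ▸ hdiag i else hoff i j hij
  choose H hH using heven
  have hdet : G.det = 2 ^ Fintype.card ι * (of H).det := by
    rw [← det_smul]
    congr 1
    ext i j
    exact hH i j
  have h2 : ¬ IsUnit (2 : ZMod 4) := by decide
  exact h2 (isUnit_of_dvd_unit (hdet ▸ (dvd_pow_self 2 Fintype.card_ne_zero).mul_right _) hG)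

lemma exists_equiv_fin_two_sum {ι : Type*} {i j : ι} (hij : i ≠ j) :
    ∃ e : Fin 2 ⊕ {k // k ≠ i ∧ k ≠ j} ≃ ι, e (.inl 0) = i ∧ e (.inl 1) = j := by
  refine ⟨Equiv.ofBijective (Sum.elim ![i, j] Subtype.val) ⟨?_, fun k => ?_⟩, rfl, rfl⟩
  · rintro (a | ⟨a, ha⟩) (b | ⟨b, hb⟩) h
    · fin_cases a <;> fin_cases b <;> simp_all
    · fin_cases a <;> simp at h <;> grind
    · fin_cases b <;> simp at h <;> grind
    · simp_all
  · by_cases hi : k = i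
    · exact ⟨.inl 0, hi.symm⟩
    by_cases hj : k = j
    · exact ⟨.inl 1, hj.symm⟩
    exact ⟨.inr ⟨k, hi, hj⟩, rfl⟩

theorem card_eq_two_mul_and_det_eq_neg_one_pow {ι : Type*} [Fintype ι] [DecidableEq ι]
    {G : Matrix ι ι (ZMod 4)} (hG : G.IsSymm) (hdiag : ∀ i, 2 ∣ G i i) (hdet : IsUnit G.det) :
    ∃ s, Fintype.card ι = 2 * s ∧ G.det = (-1) ^ s := by
  induction hn : Fintype.card ι using Nat.strong_induction_on generalizing ι with
  | _ n ih =>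
  rcases isEmpty_or_nonempty ι with hι | hι
  · exact ⟨0, by simp [← hn], det_isEmpty⟩
  obtain ⟨i, j, hij, hodd⟩ := exists_ne_not_two_dvd hdiag hdet
  obtain ⟨e, hei, hej⟩ := exists_equiv_fin_two_sum hij
  have hcard : n = 2 + Fintype.card {k // k ≠ i ∧ k ≠ j} := by
    rw [← hn, ← Fintype.card_congr e, Fintype.card_sum, Fintype.card_fin]
  have hblocks := fromBlocks_toBlocks (G.submatrix e e)
  have hsymm : (G.submatrix e e).IsSymm := by
    rw [IsSymm, transpose_submatrix, hG.eq]
  rw [← hblocks, isSymm_fromBlocks_iff] at hsymm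
  obtain ⟨hA, hB, -, hD⟩ := hsymm
  obtain ⟨S, hS, hSdiag, hdetS⟩ :=
    exists_schur_complement (C := (G.submatrix e e).toBlocks₁₂) hA hD (hdiag (e (.inl 0)))
      (hdiag (e (.inl 1))) (by simpa [toBlocks₁₁, hei, hej] using hodd)
      (fun k => hdiag (e (.inr k)))
  rw [hB, hblocks, det_submatrix_equiv_self] at hdetS
  obtain ⟨s, hs, hdetS'⟩ := ih _ (by omega) hS hSdiag (by simpa [hdetS] using hdet) rfl
  exact ⟨s + 1, by omega, by rw [hdetS, hdetS', pow_succ, mul_neg_one]⟩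

end ZModFour

section Signature

variable {ι : Type*} [Fintype ι]

lemma card_eq_card_pos_add_card_neg {d : ι → ℝ} (hd : ∀ i, d i ≠ 0) :
    Fintype.card ι = Nat.card {i // 0 < d i} + Nat.card {i // d i < 0} := by
  have hneg : {i // d i < 0} ≃ {i // ¬ 0 < d i} :=
    Equiv.subtypeEquivRight fun i => ⟨fun h => h.not_gt, fun h => (not_lt.1 h).lt_of_ne (hd i)⟩
  rw [Nat.card_congr hneg, ← Nat.card_sum, Nat.card_congr (Equiv.sumCompl _),
    Nat.card_eq_fintype_card]

lemma prod_pos_of_even_card_neg {d : ι → ℝ} (hd : ∀ i, d i ≠ 0)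
    (heven : Even (Nat.card {i // d i < 0})) : 0 < ∏ i, d i := by
  classical
  rw [Nat.card_eq_fintype_card, Fintype.card_subtype] at heven
  rw [← Finset.prod_filter_mul_prod_filter_not Finset.univ (fun i => d i < 0)]
  refine mul_pos ?_ (Finset.prod_pos fun i hi => ?_)
  · have h := Finset.prod_neg (s := {i | d i < 0}) (fun i => -d i)
    simp only [neg_neg, heven.neg_one_pow, one_mul] at h
    exact h ▸ Finset.prod_pos fun i hi => neg_pos.2 (Finset.mem_filter.1 hi).2
  · exact (not_lt.1 (Finset.mem_filter.1 hi).2).lt_of_ne' (hd i)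

variable [DecidableEq ι] {F : Matrix ι ι ℚ} {bp bm : ℕ}

lemma HasSignature.exists_diag (hF : F.det ≠ 0) (h : HasSignature F bp bm) :
    ∃ d : ι → ℝ, (∀ i, d i ≠ 0) ∧ Nat.card {i // 0 < d i} = bp ∧
      Nat.card {i // d i < 0} = bm ∧ ∃ c : ℝ, 0 < c ∧ ∏ i, d i = c * F.det := by
  obtain ⟨P, hP, hdiag, hpos, hneg⟩ := h
  set D := Pᵀ * F.map ((↑) : ℚ → ℝ) * P
  have hprod : ∏ i, D i i = P.det ^ 2 * F.det := by
    rw [← det_diagonal, show diagonal (fun i => D i i) = D from hdiag.diagonal_diag, det_mul,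
      det_mul, det_transpose, Rat.cast_det]
    ring
  have hP0 : P.det ≠ 0 := hP.ne_zero
  have hprod0 : ∏ i, D i i ≠ 0 := by
    rw [hprod]
    exact mul_ne_zero (pow_ne_zero 2 hP0) (Rat.cast_ne_zero.2 hF)
  exact ⟨fun i => D i i, fun i => Finset.prod_ne_zero_iff.1 hprod0 i (Finset.mem_univ i), hpos,
    hneg, P.det ^ 2, by positivity, hprod⟩

lemma HasSignature.card_eq (hF : F.det ≠ 0) (h : HasSignature F bp bm) :
    Fintype.card ι = bp + bm := by
  obtain ⟨d, hd, hpos, hneg, -⟩ := h.exists_diag hF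
  rw [card_eq_card_pos_add_card_neg hd, hpos, hneg]

lemma HasSignature.det_pos (hF : F.det ≠ 0) (h : HasSignature F bp bm) (hbm : Even bm) :
    0 < F.det := by
  obtain ⟨d, hd, -, hneg, c, hc, hprod⟩ := h.exists_diag hF
  have := hprod ▸ prod_pos_of_even_card_neg hd (hneg ▸ hbm)
  exact_mod_cast pos_of_mul_pos_right this hc.le

end Signature

section Gram

variable {ι : Type*} [Fintype ι] {F : Matrix ι ι ℚ}

lemma bform_comm (hF : F.IsSymm) (x y : ι → ℚ) : bform F x y = bform F y x := by
  rw [bform, dotProduct_mulVec, ← mulVec_transpose, hF.eq, dotProduct_comm, bform]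

lemma bform_add_self (hF : F.IsSymm) (x y : ι → ℚ) :
    bform F (x + y) (x + y) = bform F x x + 2 * bform F x y + bform F y y := by
  have h := bform_comm hF y x
  simp only [bform, add_dotProduct, mulVec_add, dotProduct_add] at h ⊢
  linarith

lemma isIntQ_smul_bform_of_mem_dual (hF : F.IsSymm) {L : Submodule ℤ (ι → ℚ)} {N : ℚ}
    (hN : ∀ x ∈ dual F L, ∃ m : ℤ, N * bform F x x = 2 * m) {x y : ι → ℚ}
    (hx : x ∈ dual F L) (hy : y ∈ dual F L) : isIntQ (N * bform F x y) := by
  obtain ⟨a, ha⟩ := hN x hx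
  obtain ⟨b, hb⟩ := hN y hy
  obtain ⟨c, hc⟩ := hN (x + y) (add_mem hx hy)
  refine ⟨c - a - b, ?_⟩
  rw [bform_add_self hF] at hc
  push_cast
  linarith

lemma bform_mulVec_mulVec (F B : Matrix ι ι ℚ) (c d : ι → ℚ) :
    bform F (B *ᵥ c) (B *ᵥ d) = c ⬝ᵥ (Bᵀ * F * B) *ᵥ d := by
  rw [bform, ← vecMul_transpose, mulVec_mulVec, dotProduct_mulVec, vecMul_vecMul,
    ← dotProduct_mulVec, Matrix.mul_assoc]

lemma gram_apply [DecidableEq ι] (F B : Matrix ι ι ℚ) (i j : ι) :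
    (Bᵀ * F * B) i j = bform F (B *ᵥ Pi.single i 1) (B *ᵥ Pi.single j 1) := by
  rw [bform_mulVec_mulVec]
  simp

lemma isSymm_gram (hF : F.IsSymm) (B : Matrix ι ι ℚ) : (Bᵀ * F * B).IsSymm := by
  rw [IsSymm, transpose_mul, transpose_mul, transpose_transpose, hF.eq, Matrix.mul_assoc]

lemma exists_map_intCast_eq {m n : Type*} {A : Matrix m n ℚ} (hA : ∀ i j, isIntQ (A i j)) :
    ∃ g : Matrix m n ℤ, g.map (↑) = A := by
  choose g hg using hA
  exact ⟨of g, by ext i j; exact (hg i j).symm⟩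

variable [DecidableEq ι] {B : Matrix ι ι ℚ} {L : Submodule ℤ (ι → ℚ)}

structure IsBasisMatrix (L : Submodule ℤ (ι → ℚ)) (B : Matrix ι ι ℚ) : Prop where
  isUnit_det : IsUnit B.det
  mem_iff : ∀ y, y ∈ L ↔ ∃ d : ι → ℤ, y = B *ᵥ fun i => (d i : ℚ)

lemma exists_isBasisMatrix (L : Submodule ℤ (ι → ℚ)) [L.IsLattice ℚ] :
    ∃ B : Matrix ι ι ℚ, IsBasisMatrix L B := by
  let b : Module.Basis ι ℤ L := (Module.finBasisOfFinrankEq ℤ L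
    (Submodule.IsLattice.finrank_of_pi ℚ L)).reindex (Fintype.equivFin ι).symm
  let bQ := b.extendOfIsLattice ℚ
  have hcomb (d : ι → ℤ) : ((Pi.basisFun ℚ ι).toMatrix bQ *ᵥ fun i => (d i : ℚ)) =
      ((∑ j, d j • b j : L) : ι → ℚ) := by
    ext i
    simp [bQ, mulVec, dotProduct, Module.Basis.toMatrix_apply, mul_comm]
  refine ⟨(Pi.basisFun ℚ ι).toMatrix bQ, ⟨?_, fun y => ⟨fun hy => ?_, ?_⟩⟩⟩
  · rw [← Module.Basis.det_apply]
    exact (Pi.basisFun ℚ ι).isUnit_det bQ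
  · exact ⟨b.repr ⟨y, hy⟩, by rw [hcomb, b.sum_repr]⟩
  · rintro ⟨d, rfl⟩
    rw [hcomb]
    exact Submodule.coe_mem _

namespace IsBasisMatrix

lemma mulVec_single_mem (hB : IsBasisMatrix L B) (j : ι) : B *ᵥ Pi.single j 1 ∈ L :=
  (hB.mem_iff _).2 ⟨Pi.single j 1, by congr 1; ext i; simp [Pi.single_apply]⟩

lemma isIntQ_gram (hB : IsBasisMatrix L B) (hL : ∀ x ∈ L, ∀ y ∈ L, isIntQ (bform F x y))
    (i j : ι) : isIntQ ((Bᵀ * F * B) i j) := by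
  rw [gram_apply]
  exact hL _ (hB.mulVec_single_mem i) _ (hB.mulVec_single_mem j)

lemma mulVec_inv_gram_mem_dual (hB : IsBasisMatrix L B) (hF : F.IsSymm)
    (hG : IsUnit (Bᵀ * F * B).det) (l : ι) :
    B *ᵥ ((Bᵀ * F * B)⁻¹ *ᵥ Pi.single l 1) ∈ dual F L := by
  rintro y hy
  obtain ⟨d, rfl⟩ := (hB.mem_iff y).1 hy
  refine ⟨d l, ?_⟩
  rw [bform_comm hF, bform_mulVec_mulVec, mulVec_mulVec, mul_nonsing_inv _ hG, one_mulVec]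
  simp

lemma isIntQ_smul_inv_gram (hB : IsBasisMatrix L B) (hF : F.IsSymm)
    (hG : IsUnit (Bᵀ * F * B).det) {N : ℚ}
    (hN : ∀ x ∈ dual F L, ∃ m : ℤ, N * bform F x x = 2 * m) (i j : ι) :
    isIntQ (N * (Bᵀ * F * B)⁻¹ i j) := by
  have h := isIntQ_smul_bform_of_mem_dual hF hN (hB.mulVec_inv_gram_mem_dual hF hG j)
    (hB.mulVec_inv_gram_mem_dual hF hG i)
  rw [bform_mulVec_mulVec, mulVec_mulVec, mul_nonsing_inv _ hG, one_mulVec] at h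
  simpa using h

end IsBasisMatrix

lemma det_dvd_pow_of_map_mul_eq_smul {g h : Matrix ι ι ℤ} {N : ℕ}
    (hgh : g.map ((↑) : ℤ → ℚ) * h.map (↑) = (N : ℚ) • 1) :
    g.det ∣ (N : ℤ) ^ Fintype.card ι := by
  refine ⟨h.det, ?_⟩
  have hdet := congrArg det hgh
  rw [det_mul, ← Int.cast_det, ← Int.cast_det, det_smul, det_one, mul_one] at hdet
  exact_mod_cast hdet.symm

theorem IsEvenLattice.exists_gram_det_dvd_pow {N : ℕ} (hL : IsEvenLattice F L)
    (hFpos : 0 < F.det) (hN : ∀ x ∈ dual F L, ∃ m : ℤ, (N : ℚ) * bform F x x = 2 * m) :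
    ∃ g : Matrix ι ι ℤ, g.IsSymm ∧ (∀ i, 2 ∣ g i i) ∧ 0 < g.det ∧
      g.det ∣ (N : ℤ) ^ Fintype.card ι := by
  have : L.IsLattice ℚ := ⟨hL.fg, hL.spans⟩
  obtain ⟨B, hB⟩ := exists_isBasisMatrix L
  have hGpos : 0 < (Bᵀ * F * B).det := by
    have := hB.isUnit_det.ne_zero
    rw [det_mul, det_mul, det_transpose, mul_right_comm, ← sq]
    positivity
  have hG : IsUnit (Bᵀ * F * B).det := hGpos.ne'.isUnit
  obtain ⟨g, hg⟩ := exists_map_intCast_eq (hB.isIntQ_gram hL.integral)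
  obtain ⟨h, hh⟩ := exists_map_intCast_eq (A := (N : ℚ) • (Bᵀ * F * B)⁻¹)
    (hB.isIntQ_smul_inv_gram hL.symm hG hN)
  refine ⟨g, ?_, fun i => ?_, ?_, det_dvd_pow_of_map_mul_eq_smul (h := h) ?_⟩
  · refine map_injective (Int.cast_injective (α := ℚ)) ?_
    change gᵀ.map _ = g.map _
    rw [transpose_map, hg, (isSymm_gram hL.symm B).eq]
  · obtain ⟨m, hm⟩ := hL.even _ (hB.mulVec_single_mem i)
    have : (g i i : ℚ) = 2 * m := by rw [← map_apply (f := Int.cast), hg, gram_apply, hm]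
    exact ⟨m, by exact_mod_cast this⟩
  · rw [← hg, ← Int.cast_det] at hGpos
    exact_mod_cast hGpos
  · rw [hg, hh, mul_smul_comm, mul_nonsing_inv _ hG]

end Gram

/-- Let `p ≡ 1 (mod 4)` be a prime and `M` an even lattice of signature
`(n,2)` of level exactly `p`.  Then `n ≡ 2 (mod 4)`. -/
theorem statement3 {ι : Type*} [Fintype ι] [DecidableEq ι] (p : ℕ) (hp : p.Prime)
    (hp1 : p % 4 = 1) (n : ℕ)
    (F : Matrix ι ι ℚ) (L : Submodule ℤ (ι → ℚ))
    (hL : IsEvenLattice F L) (hsig : HasSignature F n 2) (hlev : HasLevel F L p) :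
    n % 4 = 2 := by
  have hcard : Fintype.card ι = n + 2 := hsig.card_eq hL.nondeg
  obtain ⟨g, hgsymm, hgdiag, hgpos, hgdvd⟩ :=
    hL.exists_gram_det_dvd_pow (hsig.det_pos hL.nondeg even_two) hlev.2.1
  obtain ⟨a, -, ha⟩ := (Nat.dvd_prime_pow hp).1 <| by
    simpa [Int.natAbs_pow] using Int.natAbs_dvd_natAbs.2 hgdvd
  have hdet : (g.map (Int.cast : ℤ → ZMod 4)).det = 1 := by
    rw [← Int.cast_det, ← Int.natAbs_of_nonneg hgpos.le, ha]
    push_cast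
    rw [← ZMod.natCast_mod p 4, hp1, Nat.cast_one, one_pow]
  obtain ⟨s, hs, hdets⟩ := card_eq_two_mul_and_det_eq_neg_one_pow (hgsymm.map _)
    (fun i => by simpa using (Int.castRingHom (ZMod 4)).map_dvd (hgdiag i)) (hdet ▸ isUnit_one)
  obtain ⟨t, rfl⟩ := (neg_one_pow_eq_one_iff_even (by decide)).1 (hdets.symm.trans hdet)
  omega

end LatQ
end

section
/- Let L be a positive definite even lattice of rank 4 such that the set {v ∈ L : (v,v) = 2} spans L⊗ℚ. Then every prime divisor of det L is at most 5. -/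
/-!
Pick four linearly independent roots `r₀, …, r₃` (vectors of norm `2`) and let `R` be the
matrix with these rows. The Gram matrix `A = R G Rᵀ` has `det A = (det R)² det G`, so every
prime dividing `det G` divides `det A ≠ 0`. Since `A` is positive definite with `2` on the
diagonal, `Q(a eᵢ - 2 eⱼ) = 8 - 2a² > 0` for `a = A i j`, so the off-diagonal entries lie in
`{-1, 0, 1}`; running through these `3 ^ 6` matrices, every nonzero determinant divides
`2⁴ · 3³ · 5`.
-/

open Matrix

namespace LatQ

section Gram

variable {m n R : Type*} [Fintype n] [CommRing R]

lemma gram_apply_s7 (G : Matrix n n R) (r : m → n → R) (i j : m) :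
    (of r * G * (of r)ᵀ) i j = r i ⬝ᵥ G *ᵥ r j := by
  simp only [mul_apply, transpose_apply, of_apply, dotProduct, mulVec, Finset.sum_mul,
    Finset.mul_sum]
  rw [Finset.sum_comm]
  exact Finset.sum_congr rfl fun _ _ => Finset.sum_congr rfl fun _ _ => mul_assoc _ _ _

lemma dotProduct_gram_mulVec [Fintype m] (G : Matrix n n R) (r : m → n → R) (t : m → R) :
    t ⬝ᵥ (of r * G * (of r)ᵀ) *ᵥ t = (t ᵥ* of r) ⬝ᵥ G *ᵥ (t ᵥ* of r) := by
  rw [← mulVec_mulVec, ← mulVec_mulVec, dotProduct_mulVec, mulVec_transpose]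

lemma isSymm_gram_s7 {G : Matrix n n R} (hG : G.IsSymm) (r : m → n → R) :
    (of r * G * (of r)ᵀ).IsSymm := by
  simp only [IsSymm, transpose_mul, transpose_transpose, hG.eq, Matrix.mul_assoc]

lemma gram_pos [Fintype m] [Preorder R] {G : Matrix n n R}
    (hG : ∀ v : n → R, v ≠ 0 → 0 < v ⬝ᵥ G *ᵥ v) {r : m → n → R} (hr : LinearIndependent R r)
    (t : m → R) (ht : t ≠ 0) :
    0 < t ⬝ᵥ (of r * G * (of r)ᵀ) *ᵥ t := by
  rw [dotProduct_gram_mulVec]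
  exact hG _ fun h =>
    ht ((vecMul_injective_iff (M := of r)).mpr hr (h.trans (zero_vecMul _).symm))

lemma det_ne_zero_of_pos [IsDomain R] [Preorder R] [DecidableEq n] {G : Matrix n n R}
    (hG : ∀ v : n → R, v ≠ 0 → 0 < v ⬝ᵥ G *ᵥ v) : G.det ≠ 0 := by
  intro h
  obtain ⟨v, hv, hGv⟩ := exists_mulVec_eq_zero_iff.mpr h
  simpa [hGv] using hG v hv

end Gram

lemma abs_apply_le_one_of_pos {n : Type*} [Fintype n] [DecidableEq n] {A : Matrix n n ℤ}
    (hA : A.IsSymm) (hpos : ∀ v : n → ℤ, v ≠ 0 → 0 < v ⬝ᵥ A *ᵥ v) (hdiag : ∀ i, A i i = 2)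
    {i j : n} (hij : i ≠ j) : |A i j| ≤ 1 := by
  set a := A i j
  have hv : Pi.single i a - Pi.single j 2 ≠ (0 : n → ℤ) := fun h => by
    simpa [hij.symm] using congrFun h j
  have hQ := hpos _ hv
  simp only [sub_dotProduct, dotProduct_sub, mulVec_sub, single_dotProduct, mulVec_single,
    Pi.smul_apply, col_apply, MulOpposite.smul_eq_mul_unop, MulOpposite.unop_op, hdiag,
    hA.apply i j] at hQ
  rw [abs_le]
  constructor <;> nlinarith

lemma linearIndependent_of_intCast {ι m : Type*} {r : ι → m → ℤ}
    (h : LinearIndependent ℚ fun i j => (r i j : ℚ)) : LinearIndependent ℤ r :=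
  (h.restrict_scalars' ℤ).of_comp ((Int.castAddHom ℚ).toIntLinearMap.compLeft m)

lemma exists_linearIndependent_fin_of_span_eq_top {K V : Type*} [DivisionRing K]
    [AddCommGroup V] [Module K V] [FiniteDimensional K V] {s : Set V}
    (hs : Submodule.span K s = ⊤) {k : ℕ} (hk : Module.finrank K V = k) :
    ∃ v : Fin k → V, (∀ i, v i ∈ s) ∧ LinearIndependent K v := by
  subst hk
  obtain ⟨b, hbs, hb, hli⟩ := exists_linearIndependent K s
  let basis := Module.Basis.mk hli (by rw [Subtype.range_coe, hb, hs])
  let e := (Module.finBasis K V).indexEquiv basis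
  exact ⟨fun i => e i, fun i => hbs (e i).2, hli.comp e e.injective⟩

def rootGram (a b c d e f : ℤ) : Matrix (Fin 4) (Fin 4) ℤ :=
  !![2, a, b, c; a, 2, d, e; b, d, 2, f; c, e, f, 2]

lemma eq_rootGram {A : Matrix (Fin 4) (Fin 4) ℤ} (hA : A.IsSymm) (hdiag : ∀ i, A i i = 2) :
    A = rootGram (A 0 1) (A 0 2) (A 0 3) (A 1 2) (A 1 3) (A 2 3) := by
  ext i j
  fin_cases i <;> fin_cases j <;>
    simp [rootGram, hdiag, hA.apply 0 1, hA.apply 0 2, hA.apply 0 3, hA.apply 1 2, hA.apply 1 3,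
      hA.apply 2 3]

lemma det_rootGram (a b c d e f : ℤ) :
    (rootGram a b c d e f).det =
      16 - 4 * (a ^ 2 + b ^ 2 + c ^ 2 + d ^ 2 + e ^ 2 + f ^ 2)
        + (a * f) ^ 2 + (b * e) ^ 2 + (c * d) ^ 2
        + 4 * (a * b * d + a * c * e + b * c * f + d * e * f)
        - 2 * (a * b * e * f + a * c * d * f + b * c * d * e) := by
  simp [rootGram, det_succ_row_zero, Fin.sum_univ_succ, Fin.succAbove]
  ring

lemma mem_of_abs_le_one {a : ℤ} (ha : |a| ≤ 1) : a ∈ [-1, 0, 1] := by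
  simp only [List.mem_cons, List.not_mem_nil, or_false]
  rw [abs_le] at ha
  omega

/-- The nonzero determinants of these `3 ^ 6` matrices are `-27, -12, -3, 4, 5, 8, 9, 12, 16`. -/
lemma rootGram_det_dvd : ∀ a ∈ [-1, 0, 1], ∀ b ∈ [-1, 0, 1], ∀ c ∈ [-1, 0, 1],
    ∀ d ∈ [-1, 0, 1], ∀ e ∈ [-1, 0, 1], ∀ f ∈ [-1, 0, 1],
    (rootGram a b c d e f).det ≠ 0 → (rootGram a b c d e f).det ∣ 2 ^ 4 * 3 ^ 3 * 5 := by
  simp only [det_rootGram]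
  decide

lemma le_five_of_prime_dvd {q : ℕ} (hq : q.Prime) (h : q ∣ 2 ^ 4 * 3 ^ 3 * 5) : q ≤ 5 := by
  rcases (Nat.Prime.dvd_mul hq).mp h with h | h
  · rcases (Nat.Prime.dvd_mul hq).mp h with h | h
    · exact (Nat.le_of_dvd (by norm_num) (hq.dvd_of_dvd_pow h)).trans (by norm_num)
    · exact (Nat.le_of_dvd (by norm_num) (hq.dvd_of_dvd_pow h)).trans (by norm_num)
  · exact Nat.le_of_dvd (by norm_num) h

theorem statement7_general (G : Matrix (Fin 4) (Fin 4) ℤ) (hsymm : G.IsSymm)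
    (hpos : ∀ v : Fin 4 → ℤ, v ≠ 0 → 0 < v ⬝ᵥ G *ᵥ v)
    (hspan : Submodule.span ℚ
        ((fun v : Fin 4 → ℤ => (fun i => (v i : ℚ))) '' {v | v ⬝ᵥ G *ᵥ v = 2}) = ⊤) :
    ∀ q : ℕ, q.Prime → (q : ℤ) ∣ G.det → q ≤ 5 := by
  intro q hq hqG
  obtain ⟨w, hw, hwli⟩ := exists_linearIndependent_fin_of_span_eq_top hspan
    (Module.finrank_fin_fun ℚ)
  choose r hr hrw using hw
  have hrli : LinearIndependent ℤ r := linearIndependent_of_intCast (by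
    rwa [show (fun i j => (r i j : ℚ)) = w from funext hrw])
  set A := of r * G * (of r)ᵀ
  have hApos : ∀ t : Fin 4 → ℤ, t ≠ 0 → 0 < t ⬝ᵥ A *ᵥ t := gram_pos hpos hrli
  have hAsymm : A.IsSymm := isSymm_gram_s7 hsymm r
  have hAdiag : ∀ i, A i i = 2 := fun i => (gram_apply_s7 G r i i).trans (hr i)
  have hAoff {i j : Fin 4} (hij : i ≠ j) : A i j ∈ [-1, 0, 1] :=
    mem_of_abs_le_one (abs_apply_le_one_of_pos hAsymm hApos hAdiag hij)
  have hA := eq_rootGram hAsymm hAdiag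
  have hAdvd : A.det ∣ 2 ^ 4 * 3 ^ 3 * 5 := by
    rw [hA]
    exact rootGram_det_dvd _ (hAoff (by decide)) _ (hAoff (by decide)) _ (hAoff (by decide))
      _ (hAoff (by decide)) _ (hAoff (by decide)) _ (hAoff (by decide))
      (hA ▸ det_ne_zero_of_pos hApos)
  have hqA : (q : ℤ) ∣ A.det := by
    rw [det_mul, det_mul]
    exact (hqG.mul_left _).mul_right _
  exact le_five_of_prime_dvd hq (by exact_mod_cast hqA.trans hAdvd)

/-- Let `L` be a positive definite even lattice of rank `4` whose
vectors of norm `2` span `L ⊗ ℚ`.  Then every prime divisor of `det L` is at most `5`. -/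
theorem statement7 (G : Matrix (Fin 4) (Fin 4) ℤ) (hsymm : G.IsSymm)
    (heven : ∀ v : Fin 4 → ℤ, ∃ m : ℤ, v ⬝ᵥ G *ᵥ v = 2 * m)
    (hpos : ∀ v : Fin 4 → ℤ, v ≠ 0 → 0 < v ⬝ᵥ G *ᵥ v)
    (hspan : Submodule.span ℚ
        ((fun v : Fin 4 → ℤ => (fun i => (v i : ℚ))) '' {v | v ⬝ᵥ G *ᵥ v = 2}) = ⊤) :
    ∀ q : ℕ, q.Prime → (q : ℤ) ∣ G.det → q ≤ 5 :=
  statement7_general G hsymm hpos hspan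

end LatQ
end

section
/- The even lattice U ⊕ U(3) ⊕ A₂ ⊕ A₂ ⊕ A₂ of signature (8,2) is isometric to the even lattice U ⊕ U ⊕ E₆^∨(3). -/
/-!
The isometry is an explicit change of basis. The target lattice is the dual of `ℤ¹⁰` for
`D = diag(1, 1, E₆)`, i.e. the set of `y` with `Dᵀ y ∈ ℤ¹⁰`. Hence a rational matrix `A` with
inverse `A'` maps `ℤ¹⁰` onto it as soon as `Dᵀ A` and `A' (Dᵀ)⁻¹` have integer entries, and it is
an isometry when `Aᵀ G₂ A = G₁`. Taking `A = scaledIso / 3` and `A' = basisChangeInv · Dᵀ`, so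
that `Dᵀ A = basisChange`, all these conditions become identities between integer matrices,
checked by `decide`.
-/

open Matrix

namespace LatQ

/-- The rational Gram matrix of the hyperbolic plane `U`. -/
def UQ : Matrix (Fin 2) (Fin 2) ℚ := !![0, 1; 1, 0]

/-- The rational Gram matrix of `U(3)`. -/
def U3Q : Matrix (Fin 2) (Fin 2) ℚ := !![0, 3; 3, 0]

/-- The rational Gram matrix of the root lattice `A₂`. -/
def A2Q : Matrix (Fin 2) (Fin 2) ℚ := !![2, -1; -1, 2]

/-- The rational Gram matrix of the root lattice `E₆`
(chain of 5 nodes, an extra node attached to the middle one). -/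
def E6Q : Matrix (Fin 6) (Fin 6) ℚ :=
  !![2, -1, 0, 0, 0, 0;
     -1, 2, -1, 0, 0, 0;
     0, -1, 2, -1, 0, -1;
     0, 0, -1, 2, -1, 0;
     0, 0, 0, -1, 2, 0;
     0, 0, -1, 0, 0, 2]

section Lattices

variable {ι κ : Type*}

lemma isIntQ_mul {a b : ℚ} (ha : isIntQ a) (hb : isIntQ b) : isIntQ (a * b) := by
  obtain ⟨m, rfl⟩ := ha; obtain ⟨n, rfl⟩ := hb; exact ⟨m * n, by push_cast; ring⟩

lemma isIntQ_dotProduct [Fintype ι] {x y : ι → ℚ} (hx : ∀ i, isIntQ (x i))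
    (hy : ∀ i, isIntQ (y i)) : isIntQ (x ⬝ᵥ y) :=
  Finset.sum_induction _ isIntQ (fun _ _ => isIntQ_add) ⟨0, by simp⟩
    fun i _ => isIntQ_mul (hx i) (hy i)

lemma mulVec_mem_stdLat [Fintype ι] (A : Matrix κ ι ℤ) {x : ι → ℚ} (hx : x ∈ stdLat ι) :
    A.map (Int.castRingHom ℚ) *ᵥ x ∈ stdLat κ :=
  fun k => isIntQ_dotProduct (fun i => ⟨A k i, rfl⟩) hx

lemma mem_stdLat_sum_iff {x : ι ⊕ κ → ℚ} :
    x ∈ stdLat (ι ⊕ κ) ↔ x ∘ Sum.inl ∈ stdLat ι ∧ x ∘ Sum.inr ∈ stdLat κ :=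
  Sum.forall

lemma mem_dual_stdLat_iff [Fintype ι] [DecidableEq ι] {F : Matrix ι ι ℚ} {w : ι → ℚ} :
    w ∈ dual F (stdLat ι) ↔ Fᵀ *ᵥ w ∈ stdLat ι := by
  have hform (z : ι → ℚ) : bform F w z = (Fᵀ *ᵥ w) ⬝ᵥ z := by
    rw [bform, dotProduct_mulVec, mulVec_transpose]
  refine ⟨fun hw i => ?_, fun hw z hz => hform z ▸ isIntQ_dotProduct hw hz⟩
  have hi : Pi.single i (1 : ℚ) ∈ stdLat ι := fun j => by
    rcases eq_or_ne j i with rfl | h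
    · exact ⟨1, by simp⟩
    · exact ⟨0, by simp [h]⟩
  simpa [hform] using hw _ hi

lemma dual_one_stdLat [Fintype ι] [DecidableEq ι] : dual 1 (stdLat ι) = stdLat ι := by
  ext x
  rw [mem_dual_stdLat_iff, transpose_one, one_mulVec]

lemma oplusL_dual_stdLat [Fintype ι] [Fintype κ] [DecidableEq ι] [DecidableEq κ]
    (F : Matrix ι ι ℚ) (G : Matrix κ κ ℚ) :
    oplusL (dual F (stdLat ι)) (dual G (stdLat κ)) = dual (oplusF F G) (stdLat (ι ⊕ κ)) := by
  ext x
  rw [mem_dual_stdLat_iff, oplusF, fromBlocks_transpose, fromBlocks_mulVec, mem_stdLat_sum_iff]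
  simp [oplusL, mem_dual_stdLat_iff, Function.comp_def]

lemma bform_mulVec [Fintype ι] [Fintype κ] (F : Matrix κ κ ℚ) (A : Matrix κ ι ℚ)
    (x y : ι → ℚ) : bform F (A *ᵥ x) (A *ᵥ y) = bform (Aᵀ * F * A) x y := by
  rw [bform, bform, ← vecMul_transpose, dotProduct_mulVec, dotProduct_mulVec, dotProduct_mulVec,
    vecMul_vecMul, vecMul_vecMul, Matrix.mul_assoc]

lemma isometric_of_mulVec [Fintype ι] [Fintype κ] [DecidableEq ι] [DecidableEq κ]
    {F : Matrix ι ι ℚ} {F' : Matrix κ κ ℚ} {L : Submodule ℤ (ι → ℚ)}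
    {L' : Submodule ℤ (κ → ℚ)} (A : Matrix κ ι ℚ) (A' : Matrix ι κ ℚ)
    (hA'A : A' * A = 1) (hAA' : A * A' = 1)
    (hA : ∀ x ∈ L, A *ᵥ x ∈ L') (hA' : ∀ y ∈ L', A' *ᵥ y ∈ L) (hF : Aᵀ * F' * A = F) :
    Isometric F L F' L' := by
  let e : L ≃ₗ[ℤ] L' :=
    { toFun x := ⟨A *ᵥ x, hA x x.2⟩
      invFun y := ⟨A' *ᵥ y, hA' y y.2⟩
      map_add' x y := Subtype.ext (mulVec_add A x y)
      map_smul' c x := Subtype.ext (((mulVecLin A).restrictScalars ℤ).map_smul c x)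
      left_inv x := Subtype.ext (by simp [mulVec_mulVec, hA'A])
      right_inv y := Subtype.ext (by simp [mulVec_mulVec, hAA']) }
  exact ⟨e, fun x y => (bform_mulVec F' A x y).trans (hF ▸ rfl)⟩

end Lattices

section Certificate

local notation "ι₁" => Fin 2 ⊕ (Fin 2 ⊕ (Fin 2 ⊕ (Fin 2 ⊕ Fin 2)))
local notation "ι₂" => Fin 2 ⊕ (Fin 2 ⊕ Fin 6)

lemma map_zsmul_castRingHom {m n : Type*} (k : ℤ) (M : Matrix m n ℤ) :
    (k • M).map (Int.castRingHom ℚ) = (k : ℚ) • M.map (Int.castRingHom ℚ) := by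
  ext; simp

def UZ : Matrix (Fin 2) (Fin 2) ℤ := !![0, 1; 1, 0]
def U3Z : Matrix (Fin 2) (Fin 2) ℤ := !![0, 3; 3, 0]
def A2Z : Matrix (Fin 2) (Fin 2) ℤ := !![2, -1; -1, 2]
def E6Z : Matrix (Fin 6) (Fin 6) ℤ :=
  !![2, -1, 0, 0, 0, 0;
     -1, 2, -1, 0, 0, 0;
     0, -1, 2, -1, 0, -1;
     0, 0, -1, 2, -1, 0;
     0, 0, 0, -1, 2, 0;
     0, 0, -1, 0, 0, 2]

lemma map_UZ : UZ.map (Int.castRingHom ℚ) = UQ := by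
  ext i j; fin_cases i <;> fin_cases j <;> rfl
lemma map_U3Z : U3Z.map (Int.castRingHom ℚ) = U3Q := by
  ext i j; fin_cases i <;> fin_cases j <;> rfl
lemma map_A2Z : A2Z.map (Int.castRingHom ℚ) = A2Q := by
  ext i j; fin_cases i <;> fin_cases j <;> rfl
lemma map_E6Z : E6Z.map (Int.castRingHom ℚ) = E6Q := by
  ext i j; fin_cases i <;> fin_cases j <;> rfl

def gramZ₁ : Matrix ι₁ ι₁ ℤ :=
  fromBlocks UZ 0 0 (fromBlocks U3Z 0 0 (fromBlocks A2Z 0 0 (fromBlocks A2Z 0 0 A2Z)))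
def gramZ₂ : Matrix ι₂ ι₂ ℤ := fromBlocks UZ 0 0 (fromBlocks UZ 0 0 ((3 : ℤ) • E6Z))
def dualGramZ : Matrix ι₂ ι₂ ℤ := fromBlocks 1 0 0 (fromBlocks 1 0 0 E6Z)

lemma map_gramZ₁ : gramZ₁.map (Int.castRingHom ℚ) =
    oplusF UQ (oplusF U3Q (oplusF A2Q (oplusF A2Q A2Q))) := by
  simp only [gramZ₁, oplusF, fromBlocks_map, map_UZ, map_U3Z, map_A2Z, Matrix.map_zero, map_zero]

lemma map_gramZ₂ : gramZ₂.map (Int.castRingHom ℚ) = oplusF UQ (oplusF UQ ((3 : ℚ) • E6Q)) := by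
  simp only [gramZ₂, oplusF, fromBlocks_map, map_UZ, map_zsmul_castRingHom, map_E6Z,
    Matrix.map_zero, map_zero, Int.cast_ofNat]

lemma map_dualGramZ : dualGramZ.map (Int.castRingHom ℚ) = oplusF 1 (oplusF 1 E6Q) := by
  simp only [dualGramZ, oplusF, fromBlocks_map, map_E6Z, Matrix.map_zero, Matrix.map_one,
    map_zero, map_one]

def idx₁ : ι₁ → Fin 10
  | .inl i => ⟨i, by omega⟩
  | .inr (.inl i) => ⟨2 + i, by omega⟩
  | .inr (.inr (.inl i)) => ⟨4 + i, by omega⟩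
  | .inr (.inr (.inr (.inl i))) => ⟨6 + i, by omega⟩
  | .inr (.inr (.inr (.inr i))) => ⟨8 + i, by omega⟩

def idx₂ : ι₂ → Fin 10
  | .inl i => ⟨i, by omega⟩
  | .inr (.inl i) => ⟨2 + i, by omega⟩
  | .inr (.inr i) => ⟨4 + i, by omega⟩

def scaledIso : Matrix ι₂ ι₁ ℤ := Matrix.submatrix
  !![3, 0, 0, 0, 0, 0, 0, 0, 0, 0;
     0, 3, 0, 0, 0, 0, 0, 0, 0, 0;
     0, 0, 9, -9, -3, -3, -6, 3, -6, 3;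
     0, 0, -9, 9, 6, -3, 6, -3, 6, -3;
     0, 0, 0, 0, 0, 0, 1, -2, -1, -1;
     0, 0, -6, 6, 3, 0, 5, -4, 4, -5;
     0, 0, -6, 9, 3, 0, 6, -6, 6, -6;
     0, 0, -6, 6, 3, 0, 4, -5, 5, -4;
     0, 0, 0, 0, 0, 0, -1, -1, 1, -2;
     0, 0, -3, 6, 3, 0, 3, -3, 3, -3] idx₂ idx₁

def basisChange : Matrix ι₂ ι₁ ℤ := (dualGramZᵀ * scaledIso).map (· / 3)

def basisChangeInv : Matrix ι₁ ι₂ ℤ := Matrix.submatrix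
  !![1, 0, 0, 0, 0, 0, 0, 0, 0, 0;
     0, 1, 0, 0, 0, 0, 0, 0, 0, 0;
     0, 0, 1, -1, 0, 2, 3, 2, 0, 2;
     0, 0, -1, 1, 0, -2, -2, -2, 0, -1;
     0, 0, 1, -1, 0, 2, 2, 2, 0, 2;
     0, 0, 0, -1, 0, 1, 1, 1, 0, 1;
     0, 0, 1, -1, 0, 2, 2, 1, -1, 1;
     0, 0, 0, 0, -1, -1, -2, -2, -1, -1;
     0, 0, 1, -1, -1, 1, 2, 2, 0, 1;
     0, 0, 0, 0, -1, -2, -2, -1, -1, -1] idx₁ idx₂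

lemma dualGramZ_transpose_mul_scaledIso : dualGramZᵀ * scaledIso = (3 : ℤ) • basisChange := by
  decide

lemma basisChangeInv_mul_dualGramZ_transpose_mul_scaledIso :
    basisChangeInv * dualGramZᵀ * scaledIso = (3 : ℤ) • 1 := by
  decide

lemma scaledIso_transpose_mul_gramZ₂_mul_scaledIso :
    scaledIsoᵀ * gramZ₂ * scaledIso = (9 : ℤ) • gramZ₁ := by
  decide

def isoMatrix : Matrix ι₂ ι₁ ℚ := (3 : ℚ)⁻¹ • scaledIso.map (Int.castRingHom ℚ)

def isoMatrixInv : Matrix ι₁ ι₂ ℚ :=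
  basisChangeInv.map (Int.castRingHom ℚ) * (oplusF 1 (oplusF 1 E6Q) : Matrix ι₂ ι₂ ℚ)ᵀ

lemma isoMatrixInv_mul_isoMatrix : isoMatrixInv * isoMatrix = 1 := by
  rw [isoMatrixInv, isoMatrix, ← map_dualGramZ, ← transpose_map, Matrix.mul_smul,
    ← Matrix.map_mul, ← Matrix.map_mul, basisChangeInv_mul_dualGramZ_transpose_mul_scaledIso,
    map_zsmul_castRingHom, Matrix.map_one _ (map_zero _) (map_one _), smul_smul]
  norm_num

lemma isoMatrix_mul_isoMatrixInv : isoMatrix * isoMatrixInv = 1 :=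
  (mul_eq_one_comm_of_card_eq ι₁ ι₂ ℚ (by simp)).mp isoMatrixInv_mul_isoMatrix

lemma isoMatrix_transpose_mul_gram_mul_isoMatrix :
    isoMatrixᵀ * oplusF UQ (oplusF UQ ((3 : ℚ) • E6Q)) * isoMatrix =
      oplusF UQ (oplusF U3Q (oplusF A2Q (oplusF A2Q A2Q))) := by
  rw [← map_gramZ₂, ← map_gramZ₁, isoMatrix, transpose_smul, Matrix.smul_mul, Matrix.smul_mul,
    Matrix.mul_smul, ← transpose_map, ← Matrix.map_mul, ← Matrix.map_mul,
    scaledIso_transpose_mul_gramZ₂_mul_scaledIso, map_zsmul_castRingHom, smul_smul, smul_smul]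
  norm_num

lemma dualGram_transpose_mul_isoMatrix :
    (oplusF 1 (oplusF 1 E6Q) : Matrix ι₂ ι₂ ℚ)ᵀ * isoMatrix =
      basisChange.map (Int.castRingHom ℚ) := by
  rw [← map_dualGramZ, ← transpose_map, isoMatrix, Matrix.mul_smul, ← Matrix.map_mul,
    dualGramZ_transpose_mul_scaledIso, map_zsmul_castRingHom, smul_smul]
  norm_num

end Certificate

/-- The even lattice `U ⊕ U(3) ⊕ A₂ ⊕ A₂ ⊕ A₂` of signature `(8,2)` is
isometric to the even lattice `U ⊕ U ⊕ E₆^∨(3)`. -/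
theorem statement10 :
    Isometric (oplusF UQ (oplusF U3Q (oplusF A2Q (oplusF A2Q A2Q))))
      (stdLat (Fin 2 ⊕ (Fin 2 ⊕ (Fin 2 ⊕ (Fin 2 ⊕ Fin 2)))))
      (oplusF UQ (oplusF UQ ((3 : ℚ) • E6Q)))
      (oplusL (stdLat (Fin 2))
        (oplusL (stdLat (Fin 2)) (dual E6Q (stdLat (Fin 6))))) := by
  rw [← dual_one_stdLat (ι := Fin 2), oplusL_dual_stdLat, oplusL_dual_stdLat]
  refine isometric_of_mulVec isoMatrix isoMatrixInv isoMatrixInv_mul_isoMatrix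
    isoMatrix_mul_isoMatrixInv (fun x hx => ?_) (fun y hy => ?_)
    isoMatrix_transpose_mul_gram_mul_isoMatrix
  · rw [mem_dual_stdLat_iff, mulVec_mulVec, dualGram_transpose_mul_isoMatrix]
    exact mulVec_mem_stdLat basisChange hx
  · rw [isoMatrixInv, ← mulVec_mulVec]
    exact mulVec_mem_stdLat basisChangeInv (mem_dual_stdLat_iff.mp hy)

end LatQ
end

section
/- Let p ≥ 5 be a prime and let L be a positive definite even lattice. If v, w ∈ L satisfy (v,v) = 2, (w,w) = 2p, and (w,x) ∈ pℤ for all x ∈ L, then (v,w) = 0. (Hence for p ≥ 5 the set of 2-roots and the set of 2p-reflective roots of L are orthogonal to each other: R(L) = R₁(L) ⊕ R₂(L).) -/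
open Matrix

namespace LatQ

section SymmetricForm

variable {n R : Type*} [Fintype n] [DecidableEq n] [CommRing R] {G : Matrix n n R}

theorem dotProduct_mulVec_comm_of_isSymm (hG : G.IsSymm) (v w : n → R) :
    v ⬝ᵥ G *ᵥ w = w ⬝ᵥ G *ᵥ v := by
  simpa only [Matrix.toBilin'_apply'] using (Matrix.isSymm_toBilin'_iff_isSymm.mpr hG).eq v w

theorem dotProduct_mulVec_sq_le [LinearOrder R] [IsStrictOrderedRing R] (hG : G.IsSymm)
    (hnonneg : ∀ x, 0 ≤ x ⬝ᵥ G *ᵥ x) (v w : n → R) :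
    (v ⬝ᵥ G *ᵥ w) ^ 2 ≤ (v ⬝ᵥ G *ᵥ v) * (w ⬝ᵥ G *ᵥ w) := by
  simpa only [Matrix.toBilin'_apply'] using
    G.toBilin'.apply_sq_le_of_symm (by simpa only [Matrix.toBilin'_apply'] using hnonneg)
      (LinearMap.BilinForm.isSymm_iff.mp (Matrix.isSymm_toBilin'_iff_isSymm.mpr hG)) v w

end SymmetricForm

theorem statement18_general (p : ℕ) (hp5 : 5 ≤ p) (n : ℕ)
    (G : Matrix (Fin n) (Fin n) ℤ) (hsymm : G.IsSymm)
    (hpos : ∀ v : Fin n → ℤ, v ≠ 0 → 0 < v ⬝ᵥ G *ᵥ v)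
    (v w : Fin n → ℤ) (hv : v ⬝ᵥ G *ᵥ v = 2) (hw : w ⬝ᵥ G *ᵥ w = 2 * p)
    (hwp : ∀ x : Fin n → ℤ, (p : ℤ) ∣ w ⬝ᵥ G *ᵥ x) :
    v ⬝ᵥ G *ᵥ w = 0 := by
  have hnonneg : ∀ x : Fin n → ℤ, 0 ≤ x ⬝ᵥ G *ᵥ x := fun x => by
    rcases eq_or_ne x 0 with rfl | hx
    · simp
    · exact (hpos x hx).le
  have hdvd : (p : ℤ) ∣ v ⬝ᵥ G *ᵥ w := dotProduct_mulVec_comm_of_isSymm hsymm v w ▸ hwp v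
  have hp5' : (5 : ℤ) ≤ p := by exact_mod_cast hp5
  -- Cauchy–Schwarz gives `(v,w)² ≤ 4p < p²`, and the only multiple of `p` in `(-p, p)` is `0`.
  have hsq : (v ⬝ᵥ G *ᵥ w) ^ 2 < (p : ℤ) ^ 2 :=
    calc (v ⬝ᵥ G *ᵥ w) ^ 2 ≤ (v ⬝ᵥ G *ᵥ v) * (w ⬝ᵥ G *ᵥ w) :=
          dotProduct_mulVec_sq_le hsymm hnonneg v w
      _ = 4 * p := by rw [hv, hw]; ring
      _ < (p : ℤ) ^ 2 := by nlinarith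
  exact Int.eq_zero_of_abs_lt_dvd hdvd (abs_lt_of_sq_lt_sq hsq (by positivity))

/-- Let `p ≥ 5` be a prime and `L` a positive definite even lattice.
If `v, w ∈ L` satisfy `(v,v) = 2`, `(w,w) = 2p` and `(w,x) ∈ pℤ` for all `x ∈ L`,
then `(v,w) = 0`. -/
theorem statement18 (p : ℕ) (hp : p.Prime) (hp5 : 5 ≤ p) (n : ℕ)
    (G : Matrix (Fin n) (Fin n) ℤ) (hsymm : G.IsSymm)
    (heven : ∀ v : Fin n → ℤ, ∃ m : ℤ, v ⬝ᵥ G *ᵥ v = 2 * m)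
    (hpos : ∀ v : Fin n → ℤ, v ≠ 0 → 0 < v ⬝ᵥ G *ᵥ v)
    (v w : Fin n → ℤ) (hv : v ⬝ᵥ G *ᵥ v = 2) (hw : w ⬝ᵥ G *ᵥ w = 2 * p)
    (hwp : ∀ x : Fin n → ℤ, (p : ℤ) ∣ w ⬝ᵥ G *ᵥ x) :
    v ⬝ᵥ G *ᵥ w = 0 :=
  statement18_general p hp5 n G hsymm hpos v w hv hw hwp

end LatQ
end
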